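/- Fix real numbers β > −1 and M, and an integer n ≥ 1; assume that M ≠ (3+β)(1+β)/(m(m+1+β)) for even m ∈ {n−1,n,n+1} and M ≠ (3+β)(1+β)/((m+1)(m+β)) for odd m ∈ {n−1,n,n+1} as needed so that all denominators below are nonzero. For ε ∈ ℝ, ε ≠ 0, set q = −e^{ε}, b = −e^{βε}, and let Φ_m = (−1)^m q^{m(m−1)/2} ((q^3;q)_m/(bq^{m+3};q)_m) ( M − q^{2m} (1−bq^3)(bq;q)_2 (q;q)_2 / ((1−q^2)(q^{m+1};q)_2 (bq^{m+1};q)_2) ) and B_n = Φ_n/Φ_{n−1}. Then, as ε → 0 (ε ≠ 0), B_n tends to ((n+2)/(2n+1+β)) · ( M − (3+β)(1+β)/((n+2)(n+1+β)) ) / ( M − (3+β)(1+β)/(n(n+1+β)) ) if n is even, and to −((n+2+β)/(2n+1+β)) · ( M − (3+β)(1+β)/((n+1)(n+2+β)) ) / ( M − (3+β)(1+β)/((n+1)(n+β)) ) if n is odd. -/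

import Mathlib

/-!
Split `Φ_m = P_m · Br_m` into the prefactor `P_m` and the bracket `Br_m`. Two expansions of
`(bq^{m+3};q)_{m+2}` give `P_{m+1} = P_m ρ_m` with
`ρ_m = -q^m (1 - q^{m+3})(1 - bq^{m+3}) / ((1 - bq^{2m+3})(1 - bq^{2m+4}))`,
so `B_n = ρ_{n-1} Br_n / Br_{n-1}`.

With `q = -e^ε`, `b = -e^{βε}`, a factor `1 - q^j` tends to `2` for odd `j` and is `-jε + o(ε)`
for even `j`, while `1 - bq^j` tends to `2` for even `j` and is `-(β + j)ε + o(ε)` for odd `j`.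
In `ρ_m` numerator and denominator both vanish to first order, and in the quotient inside `Br_m`
to third order, so their limits are quotients of leading coefficients, which depend on parities.
-/

/-- The q-shifted factorial `(a;q)_n = ∏_{k=0}^{n-1} (1 - a q^k)`. -/
noncomputable def qPoch (q a : ℝ) (n : ℕ) : ℝ :=
  ∏ k ∈ Finset.range n, (1 - a * q ^ k)

open Filter Topology Real

section QPochhammer

variable (q a : ℝ) (n : ℕ)

theorem qPoch_succ : qPoch q a (n + 1) = qPoch q a n * (1 - a * q ^ n) :=
  Finset.prod_range_succ _ _

theorem qPoch_succ' : qPoch q a (n + 1) = (1 - a) * qPoch q (a * q) n := by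
  simp only [qPoch, Finset.prod_range_succ', pow_zero, mul_one, pow_succ', mul_comm (1 - a)]
  ring_nf

theorem qPoch_two : qPoch q a 2 = (1 - a) * (1 - a * q) := by
  simp [qPoch, Finset.prod_range_succ]

theorem one_sub_mul_qPoch_mul_succ :
    (1 - a) * qPoch q (a * q) (n + 1) = qPoch q a n * qPoch q (a * q ^ n) 2 := by
  rw [← qPoch_succ', qPoch_succ, qPoch_succ, qPoch_two, pow_succ]
  ring

variable {q a n} in
theorem qPoch_ne_zero (h : ∀ k < n, 1 - a * q ^ k ≠ 0) : qPoch q a n ≠ 0 :=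
  Finset.prod_ne_zero_iff.2 fun k hk => h k (Finset.mem_range.1 hk)

end QPochhammer

theorem Filter.Tendsto.div_of_div_scale {α 𝕜 : Type*} [NontriviallyNormedField 𝕜]
    {l : Filter α} {f g s : α → 𝕜} {a b : 𝕜}
    (hf : Tendsto (fun x => f x / s x) l (𝓝 a)) (hg : Tendsto (fun x => g x / s x) l (𝓝 b))
    (hb : b ≠ 0) (hs : ∀ᶠ x in l, s x ≠ 0) :
    Tendsto (fun x => f x / g x) l (𝓝 (a / b)) :=
  (hf.div hg hb).congr' (hs.mono fun _ hx => div_div_div_cancel_right₀ hx _ _)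

section Geronimus

variable (q b M : ℝ) (m : ℕ)

noncomputable def geronimusPrefactor : ℝ :=
  (-1) ^ m * q ^ (m * (m - 1) / 2) * (qPoch q (q ^ 3) m / qPoch q (b * q ^ (m + 3)) m)

noncomputable def geronimusBracket : ℝ :=
  M - q ^ (2 * m) * (1 - b * q ^ 3) * qPoch q (b * q) 2 * qPoch q q 2 /
    ((1 - q ^ 2) * qPoch q (q ^ (m + 1)) 2 * qPoch q (b * q ^ (m + 1)) 2)

noncomputable def geronimusPhi : ℝ :=
  geronimusPrefactor q b m * geronimusBracket q b M m

noncomputable def geronimusPrefactorRatio : ℝ :=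
  -q ^ m * ((1 - q ^ (m + 3)) * (1 - b * q ^ (m + 3))) / qPoch q (b * q ^ (2 * m + 3)) 2

variable {q b M m}

theorem geronimusPrefactor_succ (h : 1 - b * q ^ (m + 3) ≠ 0) :
    geronimusPrefactor q b (m + 1) = geronimusPrefactor q b m * geronimusPrefactorRatio q b m := by
  have hden : qPoch q (b * q ^ (m + 1 + 3)) (m + 1) =
      qPoch q (b * q ^ (m + 3)) m * qPoch q (b * q ^ (2 * m + 3)) 2 / (1 - b * q ^ (m + 3)) := by
    rw [eq_div_iff h, mul_comm, show b * q ^ (m + 1 + 3) = b * q ^ (m + 3) * q by ring,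
      one_sub_mul_qPoch_mul_succ, show b * q ^ (m + 3) * q ^ m = b * q ^ (2 * m + 3) by ring]
  rw [geronimusPrefactor, geronimusPrefactor, geronimusPrefactorRatio, Nat.triangle_succ, hden,
    qPoch_succ, div_div_eq_mul_div]
  ring

theorem geronimusPhi_succ_div (hP : geronimusPrefactor q b m ≠ 0)
    (h : 1 - b * q ^ (m + 3) ≠ 0) :
    geronimusPhi q b M (m + 1) / geronimusPhi q b M m = geronimusPrefactorRatio q b m *
      (geronimusBracket q b M (m + 1) / geronimusBracket q b M m) := by
  rw [geronimusPhi, geronimusPhi, geronimusPrefactor_succ h, mul_assoc, mul_div_mul_left _ _ hP,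
    mul_div_assoc]

end Geronimus

section Exponential

variable {β ε : ℝ} {j : ℕ}

theorem neg_exp_pow (ε : ℝ) (j : ℕ) : (-exp ε) ^ j = (-1) ^ j * exp (j * ε) := by
  rw [neg_pow, ← exp_nat_mul]

theorem neg_exp_mul_neg_exp_pow (β ε : ℝ) (j : ℕ) :
    -exp (β * ε) * (-exp ε) ^ j = -(-1) ^ j * exp ((β + j) * ε) := by
  rw [neg_exp_pow, add_mul, exp_add]
  ring

theorem one_sub_mul_exp_ne_zero {s c : ℝ} (hs : |s| = 1) (hc : c ≠ 0) (hε : ε ≠ 0) :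
    1 - s * exp (c * ε) ≠ 0 := by
  intro h
  have habs := congrArg abs (sub_eq_zero.1 h)
  rw [abs_one, abs_mul, hs, one_mul, abs_exp, eq_comm, exp_eq_one_iff] at habs
  exact mul_ne_zero hc hε habs

theorem one_sub_neg_exp_pow_ne_zero (hε : ε ≠ 0) (hj : j ≠ 0) : 1 - (-exp ε) ^ j ≠ 0 := by
  rw [neg_exp_pow]
  exact one_sub_mul_exp_ne_zero (by simp) (Nat.cast_ne_zero.2 hj) hε

theorem one_sub_neg_exp_mul_neg_exp_pow_ne_zero (hβ : -1 < β) (hε : ε ≠ 0) (hj : j ≠ 0) :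
    1 - -exp (β * ε) * (-exp ε) ^ j ≠ 0 := by
  have hj1 : (1 : ℝ) ≤ j := Nat.one_le_cast.2 (Nat.one_le_iff_ne_zero.2 hj)
  rw [neg_exp_mul_neg_exp_pow]
  exact one_sub_mul_exp_ne_zero (by simp) (by linarith) hε

theorem tendsto_one_sub_exp_mul_div (c : ℝ) :
    Tendsto (fun ε => (1 - exp (c * ε)) / ε) (𝓝[≠] 0) (𝓝 (-c)) := by
  have h : HasDerivAt (fun ε => 1 - exp (c * ε)) (-c) 0 := by
    simpa using (((hasDerivAt_id (0 : ℝ)).const_mul c).exp).const_sub 1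
  refine (hasDerivAt_iff_tendsto_slope.1 h).congr fun ε => ?_
  simp [slope_def_field]

theorem tendsto_one_add_exp_mul (c : ℝ) :
    Tendsto (fun ε => 1 + exp (c * ε)) (𝓝[≠] 0) (𝓝 2) := by
  have h : Continuous fun ε => 1 + exp (c * ε) := by fun_prop
  exact (h.tendsto' 0 2 (by norm_num)).mono_left nhdsWithin_le_nhds

theorem tendsto_neg_exp_pow (j : ℕ) :
    Tendsto (fun ε => (-exp ε) ^ j) (𝓝[≠] 0) (𝓝 ((-1) ^ j)) := by
  have h : Continuous fun ε => (-exp ε) ^ j := by fun_prop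
  exact (h.tendsto' 0 _ (by simp)).mono_left nhdsWithin_le_nhds

theorem tendsto_one_sub_neg_exp_pow_div (hj : Even j) :
    Tendsto (fun ε => (1 - (-exp ε) ^ j) / ε) (𝓝[≠] 0) (𝓝 (-j)) := by
  simpa only [neg_exp_pow, hj.neg_one_pow, one_mul] using tendsto_one_sub_exp_mul_div j

theorem tendsto_one_sub_neg_exp_pow (hj : Odd j) :
    Tendsto (fun ε => 1 - (-exp ε) ^ j) (𝓝[≠] 0) (𝓝 2) := by
  simpa only [neg_exp_pow, hj.neg_one_pow, neg_one_mul, sub_neg_eq_add] using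
    tendsto_one_add_exp_mul j

theorem tendsto_one_sub_neg_exp_mul_neg_exp_pow_div (hj : Odd j) :
    Tendsto (fun ε => (1 - -exp (β * ε) * (-exp ε) ^ j) / ε) (𝓝[≠] 0)
      (𝓝 (-(β + j))) := by
  simpa only [neg_exp_mul_neg_exp_pow, hj.neg_one_pow, neg_neg, one_mul] using
    tendsto_one_sub_exp_mul_div (β + j)

theorem tendsto_one_sub_neg_exp_mul_neg_exp_pow (hj : Even j) :
    Tendsto (fun ε => 1 - -exp (β * ε) * (-exp ε) ^ j) (𝓝[≠] 0) (𝓝 2) := by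
  simpa only [neg_exp_mul_neg_exp_pow, hj.neg_one_pow, neg_one_mul, sub_neg_eq_add] using
    tendsto_one_add_exp_mul (β + j)

theorem tendsto_qPoch_neg_exp_pow_two_div (j : ℕ) :
    Tendsto (fun ε => qPoch (-exp ε) ((-exp ε) ^ j) 2 / ε) (𝓝[≠] 0)
      (𝓝 (-2 * if Even j then (j : ℝ) else j + 1)) := by
  simp only [qPoch_two, ← pow_succ]
  rcases Nat.even_or_odd j with hj | hj
  · convert (tendsto_one_sub_neg_exp_pow_div hj).mul (tendsto_one_sub_neg_exp_pow hj.add_one)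
      using 1
    · funext ε; ring
    · rw [if_pos hj]
      congr 1
      ring
  · convert (tendsto_one_sub_neg_exp_pow hj).mul (tendsto_one_sub_neg_exp_pow_div hj.add_one)
      using 1
    · funext ε; ring
    · rw [if_neg (Nat.not_even_iff_odd.2 hj)]
      congr 1
      push_cast
      ring

theorem tendsto_qPoch_neg_exp_mul_neg_exp_pow_two_div (β : ℝ) (j : ℕ) :
    Tendsto (fun ε => qPoch (-exp ε) (-exp (β * ε) * (-exp ε) ^ j) 2 / ε) (𝓝[≠] 0)
      (𝓝 (-2 * (β + if Even j then (j : ℝ) + 1 else j))) := by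
  simp only [qPoch_two, mul_assoc, ← pow_succ]
  rcases Nat.even_or_odd j with hj | hj
  · convert (tendsto_one_sub_neg_exp_mul_neg_exp_pow (β := β) hj).mul
      (tendsto_one_sub_neg_exp_mul_neg_exp_pow_div hj.add_one) using 1
    · funext ε; ring
    · rw [if_pos hj]
      congr 1
      push_cast
      ring
  · convert (tendsto_one_sub_neg_exp_mul_neg_exp_pow_div (β := β) hj).mul
      (tendsto_one_sub_neg_exp_mul_neg_exp_pow hj.add_one) using 1
    · funext ε; ring
    · rw [if_neg (Nat.not_even_iff_odd.2 hj)]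
      congr 1
      ring

end Exponential

noncomputable def geronimusPrefactorRatioLimit (β : ℝ) (m : ℕ) : ℝ :=
  if Even m then -(β + m + 3) / (β + 2 * m + 3) else (m + 3) / (β + 2 * m + 3)

noncomputable def geronimusBracketLimit (β M : ℝ) (m : ℕ) : ℝ :=
  M - (3 + β) * (1 + β) /
    (if Even m then ((m : ℝ) + 2) * (m + 1 + β) else ((m : ℝ) + 1) * (m + 2 + β))

theorem tendsto_geronimusPrefactorRatio (β : ℝ) (hβ : -1 < β) (m : ℕ) :
    Tendsto (fun ε => geronimusPrefactorRatio (-exp ε) (-exp (β * ε)) m) (𝓝[≠] 0)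
      (𝓝 (geronimusPrefactorRatioLimit β m)) := by
  have hden := tendsto_qPoch_neg_exp_mul_neg_exp_pow_two_div β (2 * m + 3)
  rw [if_neg (Nat.not_even_iff_odd.2 ⟨m + 1, by ring⟩)] at hden
  have hden0 : -2 * (β + ((2 * m + 3 : ℕ) : ℝ)) ≠ 0 := by
    push_cast
    nlinarith [(m.cast_nonneg : (0 : ℝ) ≤ m)]
  suffices key : ∀ a, Tendsto (fun ε => -(-exp ε) ^ m * ((1 - (-exp ε) ^ (m + 3)) *
      (1 - -exp (β * ε) * (-exp ε) ^ (m + 3))) / ε) (𝓝[≠] 0) (𝓝 a) →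
      Tendsto (fun ε => geronimusPrefactorRatio (-exp ε) (-exp (β * ε)) m) (𝓝[≠] 0)
        (𝓝 (a / (-2 * (β + ((2 * m + 3 : ℕ) : ℝ))))) by
    rcases Nat.even_or_odd m with hm | hm
    · have h3 : Odd (m + 3) := hm.add_odd (by decide)
      convert key _ (((tendsto_neg_exp_pow m).neg.mul ((tendsto_one_sub_neg_exp_pow h3).mul
        (tendsto_one_sub_neg_exp_mul_neg_exp_pow_div (β := β) h3))).congr fun ε => by ring)
        using 2
      rw [geronimusPrefactorRatioLimit, if_pos hm, hm.neg_one_pow]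
      field_simp
      push_cast
      ring
    · have h3 : Even (m + 3) := hm.add_odd (by decide)
      convert key _ (((tendsto_neg_exp_pow m).neg.mul ((tendsto_one_sub_neg_exp_pow_div h3).mul
        (tendsto_one_sub_neg_exp_mul_neg_exp_pow (β := β) h3))).congr fun ε => by ring)
        using 2
      rw [geronimusPrefactorRatioLimit, if_neg (Nat.not_even_iff_odd.2 hm), hm.neg_one_pow]
      field_simp
      push_cast
      ring
  exact fun a ha => ha.div_of_div_scale hden hden0 eventually_mem_nhdsWithin

theorem tendsto_geronimusBracket (β M : ℝ) (hβ : -1 < β) (m : ℕ) :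
    Tendsto (fun ε => geronimusBracket (-exp ε) (-exp (β * ε)) M m) (𝓝[≠] 0)
      (𝓝 (geronimusBracketLimit β M m)) := by
  set d : ℝ := if Even m then ((m : ℝ) + 2) * (m + 1 + β) else ((m : ℝ) + 1) * (m + 2 + β)
    with hd
  have hd0 : d ≠ 0 := by
    rw [hd]
    split_ifs <;> nlinarith [(m.cast_nonneg : (0 : ℝ) ≤ m)]
  have hq := tendsto_qPoch_neg_exp_pow_two_div 1
  have hbq := tendsto_qPoch_neg_exp_mul_neg_exp_pow_two_div β 1
  simp only [pow_one, Nat.not_even_one, if_false] at hq hbq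
  have hnum : Tendsto (fun ε => (-exp ε) ^ (2 * m) * (1 - -exp (β * ε) * (-exp ε) ^ 3) *
      qPoch (-exp ε) (-exp (β * ε) * -exp ε) 2 * qPoch (-exp ε) (-exp ε) 2 / ε ^ 3)
      (𝓝[≠] 0) (𝓝 (-8 * ((3 + β) * (1 + β)))) := by
    convert (((tendsto_neg_exp_pow (2 * m)).mul (tendsto_one_sub_neg_exp_mul_neg_exp_pow_div
      (β := β) (by decide : Odd 3))).mul hbq).mul hq using 1
    · funext ε
      ring
    · rw [(even_two_mul m).neg_one_pow]
      congr 1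
      push_cast
      ring
  have hden : Tendsto (fun ε => (1 - (-exp ε) ^ 2) * qPoch (-exp ε) ((-exp ε) ^ (m + 1)) 2 *
      qPoch (-exp ε) (-exp (β * ε) * (-exp ε) ^ (m + 1)) 2 / ε ^ 3) (𝓝[≠] 0)
      (𝓝 (-8 * d)) := by
    convert ((tendsto_one_sub_neg_exp_pow_div (by decide : Even 2)).mul
      (tendsto_qPoch_neg_exp_pow_two_div (m + 1))).mul
      (tendsto_qPoch_neg_exp_mul_neg_exp_pow_two_div β (m + 1)) using 1
    · funext ε
      ring
    · rw [hd]
      rcases Nat.even_or_odd m with hm | hm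
      · simp only [if_pos hm, if_neg (Nat.not_even_iff_odd.2 hm.add_one)]
        congr 1
        push_cast
        ring
      · simp only [if_neg (Nat.not_even_iff_odd.2 hm), if_pos hm.add_one]
        congr 1
        push_cast
        ring
  simp only [geronimusBracket, geronimusBracketLimit]
  convert tendsto_const_nhds.sub (hnum.div_of_div_scale hden (mul_ne_zero (by norm_num) hd0)
    (eventually_mem_nhdsWithin.mono fun ε hε => pow_ne_zero 3 hε)) using 2
  rw [mul_div_mul_left _ _ (by norm_num)]

theorem geronimusPrefactor_neg_exp_ne_zero {β ε : ℝ} (hβ : -1 < β) (hε : ε ≠ 0)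
    (m : ℕ) :
    geronimusPrefactor (-exp ε) (-exp (β * ε)) m ≠ 0 := by
  refine mul_ne_zero (mul_ne_zero (pow_ne_zero _ (by norm_num))
    (pow_ne_zero _ (neg_ne_zero.2 (exp_pos ε).ne')))
    (div_ne_zero (qPoch_ne_zero fun k _ => ?_) (qPoch_ne_zero fun k _ => ?_))
  · rw [← pow_add]
    exact one_sub_neg_exp_pow_ne_zero hε (by omega)
  · rw [mul_assoc, ← pow_add]
    exact one_sub_neg_exp_mul_neg_exp_pow_ne_zero hβ hε (by omega)

theorem tendsto_geronimusPhi_succ_div (β M : ℝ) (hβ : -1 < β) (m : ℕ)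
    (hM : geronimusBracketLimit β M m ≠ 0) :
    Tendsto (fun ε => geronimusPhi (-exp ε) (-exp (β * ε)) M (m + 1) /
        geronimusPhi (-exp ε) (-exp (β * ε)) M m) (𝓝[≠] 0)
      (𝓝 (geronimusPrefactorRatioLimit β m *
        (geronimusBracketLimit β M (m + 1) / geronimusBracketLimit β M m))) := by
  refine ((tendsto_geronimusPrefactorRatio β hβ m).mul
    ((tendsto_geronimusBracket β M hβ (m + 1)).div
      (tendsto_geronimusBracket β M hβ m) hM)).congr' ?_
  filter_upwards [eventually_mem_nhdsWithin] with ε hε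
  rw [geronimusPhi_succ_div (geronimusPrefactor_neg_exp_ne_zero hβ hε m)
    (one_sub_neg_exp_mul_neg_exp_pow_ne_zero hβ hε (by omega))]
  rfl

/-- `q → −1` limit of the Geronimus transformation coefficient `B_n = Φ_n/Φ_{n−1}`
for the little q-Jacobi polynomials with `a = q²`, where
`Φ_m = (−1)^m q^{m(m−1)/2} ((q³;q)_m/(bq^{m+3};q)_m)
 (M − q^{2m}(1−bq³)(bq;q)_2(q;q)_2/((1−q²)(q^{m+1};q)_2(bq^{m+1};q)_2))`:
under `q = −e^ε`, `b = −e^{βε}` (with the nonvanishing conditions on `M` for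
`m ∈ {n−1,n,n+1}` as needed so that all denominators below are nonzero), `B_n` tends to
`((n+2)/(2n+1+β)) (M−(3+β)(1+β)/((n+2)(n+1+β)))/(M−(3+β)(1+β)/(n(n+1+β)))` for even `n`
and `−((n+2+β)/(2n+1+β)) (M−(3+β)(1+β)/((n+1)(n+2+β)))/(M−(3+β)(1+β)/((n+1)(n+β)))`
for odd `n`. -/
theorem Bn_limit (β M : ℝ) (hβ : -1 < β) (n : ℕ) (hn : 1 ≤ n)
    (hM : ∀ m : ℕ, (m = n - 1 ∨ m = n ∨ m = n + 1) →
      (Even m → 1 ≤ m → M ≠ (3 + β) * (1 + β) / ((m : ℝ) * (m + 1 + β))) ∧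
      (Odd m → M ≠ (3 + β) * (1 + β) / (((m : ℝ) + 1) * (m + β)))) :
    Filter.Tendsto
      (fun ε : ℝ =>
        let q : ℝ := -Real.exp ε
        let b : ℝ := -Real.exp (β * ε)
        let Φ : ℕ → ℝ := fun m =>
          (-1) ^ m * q ^ (m * (m - 1) / 2) *
            (qPoch q (q ^ 3) m / qPoch q (b * q ^ (m + 3)) m) *
            (M - q ^ (2 * m) * (1 - b * q ^ 3) * qPoch q (b * q) 2 * qPoch q q 2 /
              ((1 - q ^ 2) * qPoch q (q ^ (m + 1)) 2 * qPoch q (b * q ^ (m + 1)) 2))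
        Φ n / Φ (n - 1))
      (nhdsWithin 0 ({0}ᶜ : Set ℝ))
      (nhds (if Even n then
          ((n : ℝ) + 2) / (2 * n + 1 + β) *
            ((M - (3 + β) * (1 + β) / (((n : ℝ) + 2) * (n + 1 + β))) /
              (M - (3 + β) * (1 + β) / ((n : ℝ) * (n + 1 + β))))
        else
          -(((n : ℝ) + 2 + β) / (2 * n + 1 + β)) *
            ((M - (3 + β) * (1 + β) / (((n : ℝ) + 1) * (n + 2 + β))) /
              (M - (3 + β) * (1 + β) / (((n : ℝ) + 1) * (n + β)))))) := by
  obtain ⟨m, rfl⟩ : ∃ m, n = m + 1 := ⟨n - 1, by omega⟩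
  -- the condition on `M` at index `n = m + 1` is the nonvanishing of the limit of `Br_m`
  have hlim : geronimusBracketLimit β M m ≠ 0 := by
    rw [geronimusBracketLimit, sub_ne_zero]
    rcases Nat.even_or_odd m with hm | hm
    · convert (hM (m + 1) (Or.inr (Or.inl rfl))).2 hm.add_one using 2
      rw [if_pos hm]
      push_cast
      ring
    · convert (hM (m + 1) (Or.inr (Or.inl rfl))).1 hm.add_one (by omega) using 2
      rw [if_neg (Nat.not_even_iff_odd.2 hm)]
      push_cast
      ring
  show Tendsto (fun ε => geronimusPhi (-exp ε) (-exp (β * ε)) M (m + 1) /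
    geronimusPhi (-exp ε) (-exp (β * ε)) M m) _ _
  convert tendsto_geronimusPhi_succ_div β M hβ m hlim using 2
  rcases Nat.even_or_odd m with hm | hm
  · have hm1 : ¬Even (m + 1) := Nat.not_even_iff_odd.2 hm.add_one
    simp only [geronimusPrefactorRatioLimit, geronimusBracketLimit, if_pos hm, if_neg hm1]
    push_cast
    ring
  · have hm1 : Even (m + 1) := hm.add_one
    simp only [geronimusPrefactorRatioLimit, geronimusBracketLimit, if_pos hm1,
      if_neg (Nat.not_even_iff_odd.2 hm)]
    push_cast
    ring
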